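/- arXiv:2412.06114 — 2 statements merged into one kernel-verified Lean document; each statement's English description precedes it below -/
import Mathlib

section
/- If Λ₀(t) + Λ⋆(t) → ∞ as t → ∞ and, for every s ≥ 0, Λ₁(t,s) → ∞ as t → ∞, then the counterfactual cumulative incidence function is proper: lim_{t→∞} F(t) = 1. -/
open MeasureTheory ProbabilityTheory Filter Set

/-- Cumulative hazard `Λ(t) = ∫₀ᵗ λ(u) du`. -/
noncomputable def cumHaz (lam : ℝ → ℝ) (t : ℝ) : ℝ := ∫ u in (0:ℝ)..t, lam u

/-- Post-intermediate cumulative hazard `Λ₁(t,s) = ∫ₛᵗ λ₁(u,s) du`. -/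
noncomputable def cumHaz1 (lam1 : ℝ → ℝ → ℝ) (t s : ℝ) : ℝ := ∫ u in s..t, lam1 u s

/-- The counterfactual cumulative incidence function
`F(t) = ∫₀ᵗ e^{−Λ₀(s)−Λ⋆(s)} λ₀(s) ds + ∫₀ᵗ e^{−Λ₀(s)−Λ⋆(s)} λ⋆(s) (1 − e^{−Λ₁(t,s)}) ds`. -/
noncomputable def cif (lamS lam0 : ℝ → ℝ) (lam1 : ℝ → ℝ → ℝ) (t : ℝ) : ℝ :=
  (∫ s in (0:ℝ)..t, Real.exp (-cumHaz lam0 s - cumHaz lamS s) * lam0 s) +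
  ∫ s in (0:ℝ)..t, Real.exp (-cumHaz lam0 s - cumHaz lamS s) * lamS s *
    (1 - Real.exp (-cumHaz1 lam1 t s))

/-! With `S = exp (-Λ₀ - Λ⋆)`, `-S` is a primitive of `S (λ₀ + λ⋆)`, so
`F(t) = 1 - S(t) - ∫₀ᵗ S λ⋆ exp (-Λ₁(t, ·))`. Here `S(t) → 0` by assumption, and the last integral
tends to `0` by dominated convergence: its integrand is bounded by `S λ⋆`, whose integral over
`(0, ∞)` is at most `1`, and tends to `0` pointwise because `Λ₁(t, s) → ∞`. To work with globally
continuous hazards, they are first extended to all arguments by projecting onto their domains,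
which changes neither `F` on `[0, ∞)` nor the hypotheses. -/

open Real

theorem hasDerivAt_cumHaz {lam : ℝ → ℝ} (hlam : Continuous lam) (t : ℝ) :
    HasDerivAt (cumHaz lam) (lam t) t :=
  (hlam.integral_hasStrictDerivAt 0 t).hasDerivAt

theorem continuous_cumHaz {lam : ℝ → ℝ} (hlam : Continuous lam) : Continuous (cumHaz lam) :=
  continuous_iff_continuousAt.2 fun t => (hasDerivAt_cumHaz hlam t).continuousAt

theorem cumHaz_add {lam lam' : ℝ → ℝ} (hlam : Continuous lam) (hlam' : Continuous lam') (t : ℝ) :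
    cumHaz (fun u => lam u + lam' u) t = cumHaz lam t + cumHaz lam' t :=
  intervalIntegral.integral_add (hlam.intervalIntegrable _ _) (hlam'.intervalIntegrable _ _)

theorem integral_exp_neg_cumHaz_mul {lam : ℝ → ℝ} (hlam : Continuous lam) (t : ℝ) :
    ∫ s in (0:ℝ)..t, exp (-cumHaz lam s) * lam s = 1 - exp (-cumHaz lam t) := by
  have hderiv : ∀ s, HasDerivAt (fun x => -exp (-cumHaz lam x)) (exp (-cumHaz lam s) * lam s) s :=
    fun s => by simpa using ((hasDerivAt_cumHaz hlam s).fun_neg.exp).fun_neg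
  have hint : IntervalIntegrable (fun s => exp (-cumHaz lam s) * lam s) volume 0 t :=
    ((continuous_cumHaz hlam).neg.rexp.mul hlam).intervalIntegrable _ _
  rw [intervalIntegral.integral_eq_sub_of_hasDerivAt (fun s _ => hderiv s) hint]
  simp only [cumHaz, intervalIntegral.integral_same, neg_zero, exp_zero, sub_neg_eq_add]
  ring

noncomputable def survival (lam0 lamS : ℝ → ℝ) (t : ℝ) : ℝ :=
  exp (-cumHaz lam0 t - cumHaz lamS t)

section Survival

variable {lam0 lamS : ℝ → ℝ}

theorem survival_pos (t : ℝ) : 0 < survival lam0 lamS t := exp_pos _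

theorem continuous_survival (h0 : Continuous lam0) (hS : Continuous lamS) :
    Continuous (survival lam0 lamS) :=
  ((continuous_cumHaz h0).neg.sub (continuous_cumHaz hS)).rexp

theorem integral_survival_mul_add (h0 : Continuous lam0) (hS : Continuous lamS) (t : ℝ) :
    (∫ s in (0:ℝ)..t, survival lam0 lamS s * lam0 s) +
      ∫ s in (0:ℝ)..t, survival lam0 lamS s * lamS s = 1 - survival lam0 lamS t := by
  have hS_eq : ∀ s, survival lam0 lamS s = exp (-cumHaz (fun u => lam0 u + lamS u) s) := by
    intro s
    rw [survival, cumHaz_add h0 hS, neg_add']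
  have hsurv := continuous_survival h0 hS
  rw [← intervalIntegral.integral_add ((hsurv.fun_mul h0).intervalIntegrable _ _)
    ((hsurv.fun_mul hS).intervalIntegrable _ _), hS_eq t,
    ← integral_exp_neg_cumHaz_mul (h0.fun_add hS)]
  simp only [hS_eq, mul_add]

theorem integral_survival_mul_le_one (h0 : Continuous lam0) (hS : Continuous lamS)
    (h0nn : ∀ t ∈ Ici (0:ℝ), 0 ≤ lam0 t) {t : ℝ} (ht : 0 ≤ t) :
    ∫ s in (0:ℝ)..t, survival lam0 lamS s * lamS s ≤ 1 := by
  have h0int : 0 ≤ ∫ s in (0:ℝ)..t, survival lam0 lamS s * lam0 s :=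
    intervalIntegral.integral_nonneg ht fun s hs => mul_nonneg (survival_pos s).le (h0nn s hs.1)
  linarith [integral_survival_mul_add h0 hS t, survival_pos (lam0 := lam0) (lamS := lamS) t]

theorem integrableOn_survival_mul (h0 : Continuous lam0) (hS : Continuous lamS)
    (h0nn : ∀ t ∈ Ici (0:ℝ), 0 ≤ lam0 t) (hSnn : ∀ t ∈ Ici (0:ℝ), 0 ≤ lamS t) :
    IntegrableOn (fun s => survival lam0 lamS s * lamS s) (Ioi 0) := by
  have hcont := (continuous_survival h0 hS).fun_mul hS
  refine integrableOn_Ioi_of_intervalIntegral_norm_bounded 1 0 (fun t => hcont.integrableOn_Ioc)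
    tendsto_id (eventually_ge_atTop 0 |>.mono fun t ht => ?_)
  rw [intervalIntegral.integral_congr fun s hs => Real.norm_of_nonneg <|
    mul_nonneg (survival_pos s).le (hSnn s (uIcc_of_le ht ▸ hs).1)]
  exact integral_survival_mul_le_one h0 hS h0nn ht

end Survival

section PostIntermediate

variable {lam1 : ℝ → ℝ → ℝ}

theorem continuous_cumHaz1 (h1 : Continuous fun p : ℝ × ℝ => lam1 p.1 p.2) (t : ℝ) :
    Continuous fun s => cumHaz1 lam1 t s := by
  have hprim : Continuous fun p : ℝ × ℝ => ∫ u in t..p.2, lam1 u p.1 :=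
    intervalIntegral.continuous_parametric_primitive_of_continuous (f := fun s u => lam1 u s)
      (h1.comp continuous_swap)
  refine (hprim.comp (continuous_id.prodMk continuous_id)).neg.congr fun s => ?_
  exact (intervalIntegral.integral_symm _ _).symm

theorem cumHaz1_nonneg (h1nn : ∀ s t : ℝ, 0 ≤ s → s ≤ t → 0 ≤ lam1 t s) {s t : ℝ}
    (hs : 0 ≤ s) (hst : s ≤ t) : 0 ≤ cumHaz1 lam1 t s :=
  intervalIntegral.integral_nonneg hst fun u hu => h1nn s u hs hu.1

end PostIntermediate

theorem tendsto_intervalIntegral_zero_of_dominated {φ : ℝ → ℝ → ℝ} {g : ℝ → ℝ}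
    (hg : IntegrableOn g (Ioi 0))
    (hφ_meas : ∀ t, AEStronglyMeasurable (φ t) (volume.restrict (Ioc 0 t)))
    (hφ_le : ∀ t, ∀ s ∈ Ioc 0 t, ‖φ t s‖ ≤ g s)
    (hφ_lim : ∀ s, 0 < s → Tendsto (fun t => φ t s) atTop (nhds 0)) :
    Tendsto (fun t => ∫ s in (0:ℝ)..t, φ t s) atTop (nhds 0) := by
  have hg_nonneg : ∀ s ∈ Ioi (0:ℝ), 0 ≤ g s :=
    fun s hs => (norm_nonneg _).trans (hφ_le s s ⟨hs, le_rfl⟩)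
  have hlim : Tendsto (fun t => ∫ s, (Ioc 0 t).indicator (φ t) s) atTop
      (nhds (∫ _ : ℝ, (0:ℝ))) := by
    refine tendsto_integral_filter_of_dominated_convergence ((Ioi 0).indicator g)
      (.of_forall fun t => (aestronglyMeasurable_indicator_iff measurableSet_Ioc).2 (hφ_meas t))
      (.of_forall fun t => .of_forall fun s => ?_)
      ((integrable_indicator_iff measurableSet_Ioi).2 hg)
      (.of_forall fun s => ?_)
    · by_cases hs : s ∈ Ioc 0 t
      · simpa [indicator_of_mem hs, indicator_of_mem (mem_Ioi.2 hs.1)] using hφ_le t s hs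
      · simpa [indicator_of_notMem hs] using indicator_nonneg hg_nonneg s
    · by_cases hs : 0 < s
      · refine (hφ_lim s hs).congr' (eventually_ge_atTop s |>.mono fun t ht => ?_)
        exact (indicator_of_mem (show s ∈ Ioc 0 t from ⟨hs, ht⟩) _).symm
      · simp only [indicator_of_notMem fun h : s ∈ Ioc 0 _ => hs h.1, tendsto_const_nhds]
  rw [integral_zero] at hlim
  refine hlim.congr' (eventually_ge_atTop 0 |>.mono fun t ht => ?_)
  rw [integral_indicator measurableSet_Ioc, ← intervalIntegral.integral_of_le ht]

section Continuous

variable {lamS lam0 : ℝ → ℝ} {lam1 : ℝ → ℝ → ℝ}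

theorem cif_eq_one_sub_survival_sub (hScont : Continuous lamS) (h0cont : Continuous lam0)
    (h1cont : Continuous fun p : ℝ × ℝ => lam1 p.1 p.2) (t : ℝ) :
    cif lamS lam0 lam1 t = 1 - survival lam0 lamS t -
      ∫ s in (0:ℝ)..t, survival lam0 lamS s * lamS s * exp (-cumHaz1 lam1 t s) := by
  have hsurv := (continuous_survival h0cont hScont).fun_mul hScont
  have hsplit : cif lamS lam0 lam1 t = (∫ s in (0:ℝ)..t, survival lam0 lamS s * lam0 s) +
      ((∫ s in (0:ℝ)..t, survival lam0 lamS s * lamS s) -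
        ∫ s in (0:ℝ)..t, survival lam0 lamS s * lamS s * exp (-cumHaz1 lam1 t s)) := by
    rw [← intervalIntegral.integral_sub (hsurv.intervalIntegrable _ _)
      ((hsurv.fun_mul (continuous_cumHaz1 h1cont t).fun_neg.rexp).intervalIntegrable _ _)]
    simp only [cif, survival, mul_one_sub]
  rw [hsplit, ← integral_survival_mul_add h0cont hScont t]
  ring

theorem tendsto_cif_one_of_continuous (hScont : Continuous lamS) (h0cont : Continuous lam0)
    (h1cont : Continuous fun p : ℝ × ℝ => lam1 p.1 p.2)
    (hSnn : ∀ t ∈ Ici (0:ℝ), 0 ≤ lamS t) (h0nn : ∀ t ∈ Ici (0:ℝ), 0 ≤ lam0 t)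
    (h1nn : ∀ s t : ℝ, 0 ≤ s → s ≤ t → 0 ≤ lam1 t s)
    (hsum : Tendsto (fun t => cumHaz lam0 t + cumHaz lamS t) atTop atTop)
    (h1top : ∀ s : ℝ, 0 ≤ s → Tendsto (fun t => cumHaz1 lam1 t s) atTop atTop) :
    Tendsto (cif lamS lam0 lam1) atTop (nhds 1) := by
  have hsurv : Tendsto (survival lam0 lamS) atTop (nhds 0) := by
    refine (tendsto_exp_neg_atTop_nhds_zero.comp hsum).congr fun t => ?_
    rw [Function.comp_apply, neg_add', survival]
  have hweight_nonneg : ∀ s ∈ Ioi (0:ℝ), 0 ≤ survival lam0 lamS s * lamS s :=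
    fun s hs => mul_nonneg (survival_pos s).le (hSnn s (Ioi_subset_Ici_self hs))
  have hrem : Tendsto (fun t => ∫ s in (0:ℝ)..t,
      survival lam0 lamS s * lamS s * exp (-cumHaz1 lam1 t s)) atTop (nhds 0) := by
    refine tendsto_intervalIntegral_zero_of_dominated
      (integrableOn_survival_mul h0cont hScont h0nn hSnn)
      (fun t => (((continuous_survival h0cont hScont).fun_mul hScont).fun_mul
        (continuous_cumHaz1 h1cont t).fun_neg.rexp).aestronglyMeasurable)
      (fun t s hs => ?_) (fun s hs => ?_)
    · rw [norm_of_nonneg (mul_nonneg (hweight_nonneg s hs.1) (exp_pos _).le)]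
      exact mul_le_of_le_one_right (hweight_nonneg s hs.1)
        (exp_le_one_iff.2 (neg_nonpos.2 (cumHaz1_nonneg h1nn hs.1.le hs.2)))
    · simpa using (tendsto_exp_neg_atTop_nhds_zero.comp (h1top s hs.le)).const_mul
        (survival lam0 lamS s * lamS s)
  have hlim := (tendsto_const_nhds (x := (1:ℝ))).sub hsurv |>.sub hrem
  rw [sub_zero, sub_zero] at hlim
  exact hlim.congr fun t => (cif_eq_one_sub_survival_sub hScont h0cont h1cont t).symm

end Continuous

def extendIci (lam : ℝ → ℝ) (u : ℝ) : ℝ := lam (max u 0)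

def extendTriangle (lam1 : ℝ → ℝ → ℝ) (u s : ℝ) : ℝ := lam1 (max u (max s 0)) (max s 0)

section Extension

variable {lamS lam0 lam : ℝ → ℝ} {lam1 : ℝ → ℝ → ℝ}

theorem continuous_extendIci (h : ContinuousOn lam (Ici 0)) : Continuous (extendIci lam) :=
  h.comp_continuous (continuous_id.max continuous_const) fun u => le_max_right u 0

theorem continuous_extendTriangle
    (h : ContinuousOn (fun p : ℝ × ℝ => lam1 p.1 p.2) {p : ℝ × ℝ | 0 ≤ p.2 ∧ p.2 ≤ p.1}) :
    Continuous fun p : ℝ × ℝ => extendTriangle lam1 p.1 p.2 := by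
  have hs : Continuous fun p : ℝ × ℝ => max p.2 0 := continuous_snd.max continuous_const
  exact h.comp_continuous ((continuous_fst.max hs).prodMk hs)
    fun p => ⟨le_max_right _ _, le_max_right _ _⟩

theorem cumHaz_extendIci {t : ℝ} (ht : 0 ≤ t) : cumHaz (extendIci lam) t = cumHaz lam t :=
  intervalIntegral.integral_congr fun u hu => by
    rw [uIcc_of_le ht] at hu
    rw [extendIci, max_eq_left hu.1]

theorem cumHaz1_extendTriangle {s t : ℝ} (hs : 0 ≤ s) (hst : s ≤ t) :
    cumHaz1 (extendTriangle lam1) t s = cumHaz1 lam1 t s :=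
  intervalIntegral.integral_congr fun u hu => by
    rw [uIcc_of_le hst] at hu
    rw [extendTriangle, max_eq_left hs, max_eq_left hu.1]

theorem cif_extend {t : ℝ} (ht : 0 ≤ t) :
    cif (extendIci lamS) (extendIci lam0) (extendTriangle lam1) t = cif lamS lam0 lam1 t := by
  unfold cif
  congr 1 <;> refine intervalIntegral.integral_congr fun s hs => ?_ <;>
    rw [uIcc_of_le ht] at hs <;>
    simp only [cumHaz_extendIci hs.1, cumHaz1_extendTriangle hs.1 hs.2, extendIci,
      max_eq_left hs.1]

end Extension

/-- if `Λ₀(t)+Λ⋆(t) → ∞` and `Λ₁(t,s) → ∞` for every `s ≥ 0`,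
then `F(t) → 1` as `t → ∞`. -/
theorem cif_tendsto_one (lamS lam0 : ℝ → ℝ) (lam1 : ℝ → ℝ → ℝ)
    (hScont : ContinuousOn lamS (Set.Ici 0))
    (h0cont : ContinuousOn lam0 (Set.Ici 0))
    (h1cont : ContinuousOn (fun p : ℝ × ℝ => lam1 p.1 p.2) {p : ℝ × ℝ | 0 ≤ p.2 ∧ p.2 ≤ p.1})
    (hSnn : ∀ t ∈ Set.Ici (0:ℝ), 0 ≤ lamS t)
    (h0nn : ∀ t ∈ Set.Ici (0:ℝ), 0 ≤ lam0 t)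
    (h1nn : ∀ s t : ℝ, 0 ≤ s → s ≤ t → 0 ≤ lam1 t s)
    (hsum : Tendsto (fun t => cumHaz lam0 t + cumHaz lamS t) atTop atTop)
    (h1top : ∀ s : ℝ, 0 ≤ s → Tendsto (fun t => cumHaz1 lam1 t s) atTop atTop) :
    Tendsto (cif lamS lam0 lam1) atTop (nhds 1) := by
  have hsum' : Tendsto (fun t => cumHaz (extendIci lam0) t + cumHaz (extendIci lamS) t)
      atTop atTop :=
    hsum.congr' <| (eventually_ge_atTop 0).mono fun t ht => by
      simp only [cumHaz_extendIci ht]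
  have h1top' (s : ℝ) (hs : 0 ≤ s) :
      Tendsto (fun t => cumHaz1 (extendTriangle lam1) t s) atTop atTop :=
    (h1top s hs).congr' <| (eventually_ge_atTop s).mono fun t ht =>
      (cumHaz1_extendTriangle hs ht).symm
  refine (tendsto_cif_one_of_continuous (continuous_extendIci hScont)
    (continuous_extendIci h0cont) (continuous_extendTriangle h1cont)
    (fun t _ => hSnn _ (le_max_right t 0)) (fun t _ => h0nn _ (le_max_right t 0))
    (fun s t _ _ => h1nn _ _ (le_max_right _ _) (le_max_right _ _)) hsum' h1top').congr' ?_
  exact (eventually_ge_atTop 0).mono fun t ht => cif_extend ht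
end

section
/- Sharp null for the interventional indirect effect: suppose λ₁(t,s) = λ₀(t) for all 0 ≤ s ≤ t, and let λ⋆⁰ and λ⋆¹ be two continuous nonnegative intermediate-event hazards with associated counterfactual cumulative incidence functions F⁰ and F¹ (obtained from the identification formula with the same λ₀ and λ₁ but intermediate-event hazard λ⋆⁰ and λ⋆¹ respectively). Then F¹(t) − F⁰(t) = 0 for all t ≥ 0, i.e. the interventional indirect effect vanishes identically. -/
/-! Under the null the post-intermediate survival factor is `e^{-(Λ₀(t) - Λ₀(s))}`, so the
integrand of `F(t)` is the derivative in `s` of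
`G(s) = e^{-Λ⋆(s)} (e^{-Λ₀(t)} - e^{-Λ₀(s)})`.
Hence `F(t) = G(t) - G(0) = 1 - e^{-Λ₀(t)}`, which does not involve `λ⋆`. -/

open MeasureTheory ProbabilityTheory Filter Set

lemma ContinuousOn.intervalIntegrable_of_Ici {f : ℝ → ℝ} (hf : ContinuousOn f (Ici 0))
    {a b : ℝ} (ha : 0 ≤ a) (hb : 0 ≤ b) : IntervalIntegrable f volume a b :=
  (hf.mono fun _ hx => (le_min ha hb).trans hx.1).intervalIntegrable

section CumHaz

variable {lam : ℝ → ℝ}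

lemma cumHaz_zero : cumHaz lam 0 = 0 := intervalIntegral.integral_same

lemma continuousOn_cumHaz (hlam : ContinuousOn lam (Ici 0)) {t : ℝ} (ht : 0 ≤ t) :
    ContinuousOn (cumHaz lam) (Icc 0 t) := by
  have := intervalIntegral.continuousOn_primitive_interval'
    (hlam.intervalIntegrable_of_Ici le_rfl ht) left_mem_uIcc
  rwa [uIcc_of_le ht] at this

lemma hasDerivAt_cumHaz_s5 (hlam : ContinuousOn lam (Ici 0)) {s : ℝ} (hs : 0 < s) :
    HasDerivAt (cumHaz lam) (lam s) s :=
  have hcont : ∀ x ∈ Ioi (0 : ℝ), ContinuousAt lam x := fun _ hx =>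
    hlam.continuousAt (Ici_mem_nhds hx)
  intervalIntegral.integral_hasDerivAt_right (hlam.intervalIntegrable_of_Ici le_rfl hs.le)
    (ContinuousAt.stronglyMeasurableAtFilter isOpen_Ioi hcont s hs) (hcont s hs)

lemma cumHaz_sub_cumHaz (hlam : ContinuousOn lam (Ici 0)) {s t : ℝ} (hs : 0 ≤ s)
    (ht : 0 ≤ t) :
    cumHaz lam t - cumHaz lam s = ∫ u in s..t, lam u :=
  intervalIntegral.integral_interval_sub_left (hlam.intervalIntegrable_of_Ici le_rfl ht)
    (hlam.intervalIntegrable_of_Ici le_rfl hs)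

end CumHaz

lemma cumHaz1_eq_cumHaz_sub {lam0 : ℝ → ℝ} {lam1 : ℝ → ℝ → ℝ}
    (h0cont : ContinuousOn lam0 (Ici 0)) {s t : ℝ} (hs : 0 ≤ s) (hst : s ≤ t)
    (hnull : ∀ u ∈ Icc s t, lam1 u s = lam0 u) :
    cumHaz1 lam1 t s = cumHaz lam0 t - cumHaz lam0 s := by
  rw [cumHaz_sub_cumHaz h0cont hs (hs.trans hst), cumHaz1]
  exact intervalIntegral.integral_congr fun u hu => hnull u (uIcc_of_le hst ▸ hu)

lemma hasDerivAt_exp_neg_cumHaz_mul_sub {lamS lam0 : ℝ → ℝ}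
    (hScont : ContinuousOn lamS (Ici 0)) (h0cont : ContinuousOn lam0 (Ici 0)) (c : ℝ) {s : ℝ}
    (hs : 0 < s) :
    HasDerivAt (fun s => Real.exp (-cumHaz lamS s) * (c - Real.exp (-cumHaz lam0 s)))
      (Real.exp (-cumHaz lam0 s - cumHaz lamS s) * lam0 s +
        Real.exp (-cumHaz lamS s) * lamS s * (Real.exp (-cumHaz lam0 s) - c)) s := by
  refine (((hasDerivAt_cumHaz_s5 hScont hs).neg.exp).mul
    (((hasDerivAt_cumHaz_s5 h0cont hs).neg.exp).const_sub c)).congr_deriv ?_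
  simp only [Pi.neg_apply, sub_eq_add_neg (-cumHaz lam0 s), Real.exp_add]
  ring

lemma cif_eq_one_sub_exp_of_null {lamS lam0 : ℝ → ℝ} {lam1 : ℝ → ℝ → ℝ}
    (hScont : ContinuousOn lamS (Ici 0)) (h0cont : ContinuousOn lam0 (Ici 0))
    (hnull : ∀ s t : ℝ, 0 ≤ s → s ≤ t → lam1 t s = lam0 t) {t : ℝ} (ht : 0 ≤ t) :
    cif lamS lam0 lam1 t = 1 - Real.exp (-cumHaz lam0 t) := by
  have hΛ0 := continuousOn_cumHaz h0cont ht
  have hΛS := continuousOn_cumHaz hScont ht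
  have hS := hScont.mono (Icc_subset_Ici_self : Icc 0 t ⊆ _)
  have h0 := h0cont.mono (Icc_subset_Ici_self : Icc 0 t ⊆ _)
  have hpost : ∀ s ∈ uIcc 0 t,
      Real.exp (-cumHaz lam0 s - cumHaz lamS s) * lamS s * (1 - Real.exp (-cumHaz1 lam1 t s)) =
        Real.exp (-cumHaz lamS s) * lamS s *
          (Real.exp (-cumHaz lam0 s) - Real.exp (-cumHaz lam0 t)) := by
    intro s hs
    rw [uIcc_of_le ht] at hs
    rw [cumHaz1_eq_cumHaz_sub h0cont hs.1 hs.2 fun u hu => hnull s u hs.1 hu.1, neg_sub]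
    simp only [Real.exp_sub, Real.exp_neg]
    field_simp
  have hint0 : IntervalIntegrable
      (fun s => Real.exp (-cumHaz lam0 s - cumHaz lamS s) * lam0 s) volume 0 t := by
    apply ContinuousOn.intervalIntegrable
    rw [uIcc_of_le ht]
    fun_prop
  have hintS : IntervalIntegrable (fun s => Real.exp (-cumHaz lamS s) * lamS s *
      (Real.exp (-cumHaz lam0 s) - Real.exp (-cumHaz lam0 t))) volume 0 t := by
    apply ContinuousOn.intervalIntegrable
    rw [uIcc_of_le ht]
    fun_prop
  rw [cif, intervalIntegral.integral_congr hpost, ← intervalIntegral.integral_add hint0 hintS,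
    intervalIntegral.integral_eq_sub_of_hasDerivAt_of_le ht (by fun_prop)
      (fun s hs => hasDerivAt_exp_neg_cumHaz_mul_sub hScont h0cont _ hs.1) (hint0.add hintS)]
  simp only [sub_self, mul_zero, cumHaz_zero, neg_zero, Real.exp_zero]
  ring

theorem cif_indirect_sharp_null_general (lamS0 lamS1 lam0 : ℝ → ℝ) (lam1 : ℝ → ℝ → ℝ)
    (hS0cont : ContinuousOn lamS0 (Set.Ici 0))
    (hS1cont : ContinuousOn lamS1 (Set.Ici 0))
    (h0cont : ContinuousOn lam0 (Set.Ici 0))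
    (hnull : ∀ s t : ℝ, 0 ≤ s → s ≤ t → lam1 t s = lam0 t) :
    ∀ t : ℝ, 0 ≤ t → cif lamS1 lam0 lam1 t - cif lamS0 lam0 lam1 t = 0 := by
  intro t ht
  rw [cif_eq_one_sub_exp_of_null hS1cont h0cont hnull ht,
    cif_eq_one_sub_exp_of_null hS0cont h0cont hnull ht, sub_self]

/-- sharp null for the interventional indirect effect. If
`λ₁(t,s) = λ₀(t)` for all `0 ≤ s ≤ t`, then for any two intermediate-event hazards
`λ⋆⁰, λ⋆¹` the indirect effect `F¹(t) − F⁰(t)` vanishes identically. -/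
theorem cif_indirect_sharp_null (lamS0 lamS1 lam0 : ℝ → ℝ) (lam1 : ℝ → ℝ → ℝ)
    (hS0cont : ContinuousOn lamS0 (Set.Ici 0))
    (hS1cont : ContinuousOn lamS1 (Set.Ici 0))
    (h0cont : ContinuousOn lam0 (Set.Ici 0))
    (h1cont : ContinuousOn (fun p : ℝ × ℝ => lam1 p.1 p.2) {p : ℝ × ℝ | 0 ≤ p.2 ∧ p.2 ≤ p.1})
    (hS0nn : ∀ t ∈ Set.Ici (0:ℝ), 0 ≤ lamS0 t)
    (hS1nn : ∀ t ∈ Set.Ici (0:ℝ), 0 ≤ lamS1 t)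
    (h0nn : ∀ t ∈ Set.Ici (0:ℝ), 0 ≤ lam0 t)
    (h1nn : ∀ s t : ℝ, 0 ≤ s → s ≤ t → 0 ≤ lam1 t s)
    (hnull : ∀ s t : ℝ, 0 ≤ s → s ≤ t → lam1 t s = lam0 t) :
    ∀ t : ℝ, 0 ≤ t → cif lamS1 lam0 lam1 t - cif lamS0 lam0 lam1 t = 0 :=
  cif_indirect_sharp_null_general lamS0 lamS1 lam0 lam1 hS0cont hS1cont h0cont hnull
end
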